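/- Let (ζ(t)) be an irreducible continuous-time Markov chain on a finite state space, let η be a state and B, C two disjoint sets of states not containing η. Then P_η[H_B < H_C] = α/(1+α), where α = P_η[H_B < H^+_{C ∪ {η}}] / P_η[H_C < H^+_{B ∪ {η}}], provided both probabilities are positive. -/

import Mathlib

/-!
Decompose a path from `η` at its first visit after time `0` to `{η} ∪ B ∪ C`. Writing
`p = P_η[H_B < H_C]` and `p_B`, `p_C`, `p_η` for the probabilities that this visit is in `B`, in
`C` or at `η`, the chain starts afresh in the last case, so `p = p_B + p_η p`; by irreducibility
the visit happens almost surely, `p_B + p_C + p_η = 1`. Hence `p (p_B + p_C) = p_B`.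

The renewal identity is proved analytically: `x ↦ P_x[H_B < H_C]` and
`x ↦ P_x[first visit in B] + p P_x[first visit at η]` solve the same Dirichlet problem on the
complement of `{η} ∪ B ∪ C`, whose solution is unique by the maximum principle.
-/

open Finset

section ChainBasics

variable {E : Type*} [Fintype E] [DecidableEq E]

/-- The state occupied just before the `i`-th step of a finite path that starts at `η`
and then visits `w 0, w 1, …`. -/
def pstate (η : E) {n : ℕ} (w : Fin n → E) (i : Fin n) : E :=
  if (i : ℕ) = 0 then η else w ⟨(i : ℕ) - 1, lt_of_le_of_lt (Nat.sub_le _ _) i.isLt⟩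

/-- The probability (product of one-step transition probabilities of the jump chain `q`)
of the finite path starting at `η` and successively visiting `w 0, …, w (n-1)`. -/
noncomputable def pathP (q : E → E → ℝ) (η : E) {n : ℕ} (w : Fin n → E) : ℝ :=
  ∏ i : Fin n, q (pstate η w i) (w i)

open Classical in
/-- For a chain with one-step transition probabilities `q` started at `η`, the probability
that the first visit (at a step `≥ 1`) to the set `A` occurs at a state of `B`.
For `B ⊆ A`, this is the probability of the event `{H⁺_A = H_B}`. -/
noncomputable def firstHitIn (q : E → E → ℝ) (η : E) (B A : Finset E) : ℝ :=
  ∑' n : ℕ, ∑ w : Fin (n + 1) → E,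
    if (∀ i : Fin (n + 1), (i : ℕ) < n → w i ∉ A) ∧ w (Fin.last n) ∈ B
    then pathP q η w else 0

/-- `q` is a stochastic matrix. -/
def RowStochastic (q : E → E → ℝ) : Prop :=
  (∀ x y, 0 ≤ q x y) ∧ ∀ x, ∑ y, q x y = 1

/-- Irreducibility: any state can be reached from any state with positive probability. -/
def ChainIrreducible (q : E → E → ℝ) : Prop :=
  ∀ x y : E, ∃ (n : ℕ) (w : Fin (n + 1) → E), w (Fin.last n) = y ∧ 0 < pathP q x w

/-- The holding rate `λ(x) = ∑_y R(x,y)` of a continuous-time chain with jump rates `R`. -/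
noncomputable def lam (R : E → E → ℝ) (x : E) : ℝ := ∑ y, R x y

/-- The jump-chain transition probabilities of a continuous-time chain with rates `R`. -/
noncomputable def jmp (R : E → E → ℝ) (x y : E) : ℝ := R x y / lam R x

/-- The capacity `Cap(A,B) = ∑_{a∈A} μ(a) λ(a) P_a[H_B < H⁺_A]` of a continuous-time
chain with jump rates `R` and measure `μ`. -/
noncomputable def capac (R : E → E → ℝ) (μ : E → ℝ) (A B : Finset E) : ℝ :=
  ∑ a ∈ A, μ a * lam R a * firstHitIn (jmp R) a B (A ∪ B)

open Classical in
/-- The jump rates of the trace on `A` of a continuous-time chain with jump rates `R`: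
`R_A(a,b) = λ(a) P_a[H⁺_A = H_b]` for `a ≠ b` in `A`. -/
noncomputable def traceRate (R : E → E → ℝ) (A : Finset E) (a b : E) : ℝ :=
  if a ∈ A ∧ b ∈ A ∧ a ≠ b then lam R a * firstHitIn (jmp R) a {b} A else 0

end ChainBasics

section FirstHitting

open Filter Topology

variable {E : Type*} {q : E → E → ℝ}

lemma pstate_cons_succ (x y : E) {n : ℕ} (v : Fin n → E) (i : Fin n) :
    pstate x (Fin.cons y v) i.succ = pstate y v i := by
  rcases i with ⟨_ | k, hk⟩ <;> rfl

lemma pathP_cons (x y : E) {n : ℕ} (v : Fin n → E) :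
    pathP q x (Fin.cons y v) = q x y * pathP q y v := by
  simp only [pathP, Fin.prod_univ_succ, pstate_cons_succ, Fin.cons_succ, Fin.cons_zero]
  rfl

lemma last_mem_of_pathP_ne_zero {S : Set E} (hS : ∀ x ∈ S, ∀ y, q x y ≠ 0 → y ∈ S) {x : E}
    (hx : x ∈ S) {n : ℕ} (w : Fin (n + 1) → E) (hw : pathP q x w ≠ 0) : w (Fin.last n) ∈ S := by
  induction n generalizing x with
  | zero => exact hS x hx _ (by simpa [pathP, pstate] using hw)
  | succ n ih =>
    rw [← Fin.cons_self_tail w, pathP_cons, mul_ne_zero_iff] at hw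
    rw [← Fin.succ_last]
    exact ih (hS x hx _ hw.1) (Fin.tail w) hw.2

variable [Fintype E] {A B : Finset E}

lemma pathP_nonneg (hq : RowStochastic q) (x : E) {n : ℕ} (w : Fin n → E) :
    0 ≤ pathP q x w :=
  prod_nonneg fun _ _ => hq.1 _ _

lemma sum_fin_succ_pi {n : ℕ} (F : (Fin (n + 1) → E) → ℝ) :
    ∑ w, F w = ∑ y, ∑ v : Fin n → E, F (Fin.cons y v) := by
  rw [← (Fin.consEquiv fun _ => E).sum_comp, Fintype.sum_prod_type]
  rfl

lemma sum_pathP (hq : RowStochastic q) (n : ℕ) (x : E) : ∑ w : Fin n → E, pathP q x w = 1 := by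
  induction n generalizing x with
  | zero => simp [pathP]
  | succ n ih => simp only [sum_fin_succ_pi, pathP_cons, ← mul_sum, ih, mul_one, hq.2 x]

lemma sum_ite_pathP_nonneg (hq : RowStochastic q) (x : E) {n : ℕ} (P : (Fin n → E) → Prop)
    [DecidablePred P] : 0 ≤ ∑ w, if P w then pathP q x w else 0 :=
  sum_nonneg fun w _ => by split_ifs; exacts [pathP_nonneg hq x w, le_rfl]

lemma sum_ite_pathP_succ (x : E) {n : ℕ} (P : (Fin (n + 1) → E) → Prop) [DecidablePred P] :
    ∑ w, (if P w then pathP q x w else 0) =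
      ∑ y, q x y * ∑ v, if P (Fin.cons y v) then pathP q y v else 0 := by
  simp only [sum_fin_succ_pi, pathP_cons, mul_sum, mul_ite, mul_zero]

-- A positive maximum of `e` would propagate along possible steps until the chain reaches `A`.
lemma le_zero_of_eq_sum_of_notMem (hq : RowStochastic q) (hirr : ChainIrreducible q)
    (hA : A.Nonempty) {e : E → ℝ} (hbdry : ∀ x ∈ A, e x = 0)
    (hharm : ∀ x ∉ A, e x = ∑ y, q x y * e y) (x : E) : e x ≤ 0 := by
  obtain ⟨z, -, hz⟩ := exists_max_image univ e ⟨x, mem_univ x⟩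
  by_contra! hx
  have hpos : 0 < e z := hx.trans_le (hz x (mem_univ x))
  have hclosed : ∀ y ∈ {y | e y = e z}, ∀ y', q y y' ≠ 0 → y' ∈ {y | e y = e z} := by
    intro y (hy : e y = e z) y' hyy'
    have hyA : y ∉ A := fun h => by linarith [hbdry y h]
    have hsum : ∑ y', q y y' * (e z - e y') = 0 := by
      simp only [mul_sub, sum_sub_distrib, ← sum_mul, hq.2, one_mul, ← hharm y hyA, hy, sub_self]
    have hterm := (sum_eq_zero_iff_of_nonneg fun y'' _ =>
      mul_nonneg (hq.1 y y'') (sub_nonneg.2 (hz y'' (mem_univ _)))).1 hsum y'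
        (mem_univ _)
    exact (sub_eq_zero.1 ((mul_eq_zero.1 hterm).resolve_left hyy')).symm
  obtain ⟨a, ha⟩ := hA
  obtain ⟨n, w, hlast, hw⟩ := hirr z a
  have hza : e a = e z := hlast ▸ last_mem_of_pathP_ne_zero hclosed rfl w hw.ne'
  linarith [hbdry a ha]

variable [DecidableEq E] {x : E}

noncomputable def avoidProb (q : E → E → ℝ) (x : E) (A : Finset E) (n : ℕ) : ℝ :=
  ∑ w : Fin n → E, if ∀ i, w i ∉ A then pathP q x w else 0

lemma avoidProb_nonneg (hq : RowStochastic q) (n : ℕ) : 0 ≤ avoidProb q x A n :=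
  sum_ite_pathP_nonneg hq x _

lemma avoidProb_zero : avoidProb q x A 0 = 1 := by
  simp [avoidProb, pathP]

lemma avoidProb_succ (n : ℕ) :
    avoidProb q x A (n + 1) = ∑ y, q x y * if y ∈ A then 0 else avoidProb q y A n := by
  rw [avoidProb, sum_ite_pathP_succ]
  refine sum_congr rfl fun y _ => ?_
  by_cases hy : y ∈ A <;> simp [hy, Fin.forall_fin_succ, avoidProb]

noncomputable def firstHitAt (q : E → E → ℝ) (x : E) (B A : Finset E) (n : ℕ) : ℝ :=
  ∑ w : Fin (n + 1) → E,
    if (∀ i : Fin (n + 1), (i : ℕ) < n → w i ∉ A) ∧ w (Fin.last n) ∈ B then pathP q x w else 0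

lemma firstHitIn_eq_tsum : firstHitIn q x B A = ∑' n, firstHitAt q x B A n := rfl

lemma firstHitAt_nonneg (hq : RowStochastic q) (n : ℕ) : 0 ≤ firstHitAt q x B A n :=
  sum_ite_pathP_nonneg hq x _

lemma firstHitAt_mono (hq : RowStochastic q) {B' : Finset E} (hB : B ⊆ B') (n : ℕ) :
    firstHitAt q x B A n ≤ firstHitAt q x B' A n :=
  sum_le_sum fun w _ => by
    split_ifs with h h'
    exacts [le_rfl, absurd ⟨h.1, hB h.2⟩ h', pathP_nonneg hq x w, le_rfl]

lemma firstHitAt_zero : firstHitAt q x B A 0 = ∑ y, q x y * if y ∈ B then 1 else 0 := by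
  rw [firstHitAt, sum_ite_pathP_succ]
  refine sum_congr rfl fun y _ => ?_
  by_cases hy : y ∈ B <;> simp [hy, pathP]

lemma firstHitAt_succ (n : ℕ) :
    firstHitAt q x B A (n + 1) = ∑ y, q x y * if y ∈ A then 0 else firstHitAt q y B A n := by
  rw [firstHitAt, sum_ite_pathP_succ]
  refine sum_congr rfl fun y _ => ?_
  by_cases hy : y ∈ A <;> simp [hy, Fin.forall_fin_succ, firstHitAt, ← Fin.succ_last]

lemma firstHitAt_self (hq : RowStochastic q) (n : ℕ) (x : E) :
    firstHitAt q x A A n = avoidProb q x A n - avoidProb q x A (n + 1) := by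
  induction n generalizing x with
  | zero =>
    rw [firstHitAt_zero, avoidProb_zero, avoidProb_succ, eq_sub_iff_add_eq,
      ← sum_add_distrib]
    refine (sum_congr rfl fun y _ => ?_).trans (hq.2 x)
    split_ifs <;> simp [avoidProb_zero]
  | succ n ih =>
    rw [firstHitAt_succ, avoidProb_succ, avoidProb_succ (n + 1), ← sum_sub_distrib]
    refine sum_congr rfl fun y _ => ?_
    split_ifs <;> simp [ih, mul_sub]

lemma sum_range_firstHitAt_self (hq : RowStochastic q) (N : ℕ) :
    ∑ n ∈ range N, firstHitAt q x A A n = 1 - avoidProb q x A N := by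
  simp only [firstHitAt_self hq, sum_range_sub', avoidProb_zero]

lemma avoidProb_antitone (hq : RowStochastic q) (x : E) : Antitone (avoidProb q x A) :=
  antitone_nat_of_succ_le fun n => by
    linarith [firstHitAt_self (A := A) hq n x, firstHitAt_nonneg (x := x) (B := A) (A := A) hq n]

lemma summable_firstHitAt (hq : RowStochastic q) (hBA : B ⊆ A) :
    Summable (firstHitAt q x B A) :=
  summable_of_sum_range_le (c := 1) (fun n => firstHitAt_nonneg hq n) fun N =>
    calc ∑ n ∈ range N, firstHitAt q x B A n
        ≤ ∑ n ∈ range N, firstHitAt q x A A n :=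
          sum_le_sum fun n _ => firstHitAt_mono hq hBA n
      _ = 1 - avoidProb q x A N := sum_range_firstHitAt_self hq N
      _ ≤ 1 := sub_le_self _ (avoidProb_nonneg hq N)

lemma exists_avoidProb_lt_one (hq : RowStochastic q) (hirr : ChainIrreducible q) {a : E}
    (ha : a ∈ A) (x : E) : ∃ m, avoidProb q x A m < 1 := by
  obtain ⟨n, w, hlast, hpos⟩ := hirr x a
  have hsplit : avoidProb q x A (n + 1) =
      1 - ∑ w' : Fin (n + 1) → E, if ∀ i, w' i ∉ A then 0 else pathP q x w' := by
    rw [eq_sub_iff_add_eq, avoidProb, ← sum_add_distrib, ← sum_pathP hq (n + 1) x]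
    exact sum_congr rfl fun w' _ => by split_ifs <;> simp
  have hw : pathP q x w ≤ ∑ w' : Fin (n + 1) → E, if ∀ i, w' i ∉ A then 0 else pathP q x w' := by
    refine le_of_eq_of_le ?_ (single_le_sum (fun w' _ => ?_) (mem_univ w))
    · rw [if_neg (not_forall.2 ⟨Fin.last n, not_not.2 (hlast ▸ ha)⟩)]
    · split_ifs
      exacts [le_rfl, pathP_nonneg hq x w']
  exact ⟨n + 1, by linarith⟩

lemma exists_avoidProb_le_lt_one (hq : RowStochastic q) (hirr : ChainIrreducible q)
    (hA : A.Nonempty) : ∃ (n : ℕ) (ρ : ℝ), ρ < 1 ∧ ∀ x, avoidProb q x A n ≤ ρ := by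
  obtain ⟨a, ha⟩ := hA
  choose m hm using exists_avoidProb_lt_one hq hirr ha
  have hE : (univ : Finset E).Nonempty := univ_nonempty_iff.2 ⟨a⟩
  set N := univ.sup m
  refine ⟨N, univ.sup' hE fun x => avoidProb q x A N, (sup'_lt_iff hE).2 fun x _ => ?_,
    fun x => le_sup' (fun x => avoidProb q x A N) (mem_univ x)⟩
  exact (avoidProb_antitone hq x (le_sup (mem_univ x))).trans_lt (hm x)

lemma avoidProb_add_le (hq : RowStochastic q) {n : ℕ} {ρ : ℝ} (hρ : ∀ x, avoidProb q x A n ≤ ρ)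
    (m : ℕ) (x : E) : avoidProb q x A (m + n) ≤ avoidProb q x A m * ρ := by
  induction m generalizing x with
  | zero => simpa [avoidProb_zero] using hρ x
  | succ m ih =>
    rw [Nat.add_right_comm, avoidProb_succ, avoidProb_succ, sum_mul]
    refine sum_le_sum fun y _ => ?_
    split_ifs
    · simp
    · rw [mul_assoc]
      exact mul_le_mul_of_nonneg_left (ih y) (hq.1 x y)

lemma tendsto_avoidProb (hq : RowStochastic q) (hirr : ChainIrreducible q) (hA : A.Nonempty)
    (x : E) : Tendsto (avoidProb q x A) atTop (𝓝 0) := by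
  obtain ⟨n, ρ, hρ1, hρ⟩ := exists_avoidProb_le_lt_one hq hirr hA
  have hρ0 : 0 ≤ ρ := (avoidProb_nonneg hq n).trans (hρ x)
  have hn : n ≠ 0 := by
    rintro rfl
    linarith [hρ x, avoidProb_zero (q := q) (x := x) (A := A)]
  have hpow : ∀ k, avoidProb q x A (k * n) ≤ ρ ^ k := by
    intro k
    induction k with
    | zero => simp [avoidProb_zero]
    | succ k ih =>
      calc avoidProb q x A ((k + 1) * n) ≤ avoidProb q x A (k * n) * ρ := by
            rw [Nat.succ_mul]; exact avoidProb_add_le hq hρ _ x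
        _ ≤ ρ ^ (k + 1) := by rw [pow_succ]; exact mul_le_mul_of_nonneg_right ih hρ0
  refine squeeze_zero (fun m => avoidProb_nonneg hq m) (fun m => ?_)
    ((tendsto_pow_atTop_nhds_zero_of_lt_one hρ0 hρ1).comp (Nat.tendsto_div_const_atTop hn))
  exact (avoidProb_antitone hq x (Nat.div_mul_le_self m n)).trans (hpow _)

lemma firstHitIn_self (hq : RowStochastic q) (hirr : ChainIrreducible q) (hA : A.Nonempty)
    (x : E) : firstHitIn q x A A = 1 := by
  refine tendsto_nhds_unique (summable_firstHitAt hq subset_rfl).hasSum.tendsto_sum_nat ?_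
  simp only [sum_range_firstHitAt_self hq]
  simpa using (tendsto_avoidProb hq hirr hA x).const_sub 1

lemma firstHitIn_nonneg (hq : RowStochastic q) : 0 ≤ firstHitIn q x B A :=
  tsum_nonneg fun n => firstHitAt_nonneg hq n

lemma firstHitIn_union {C : Finset E} (hq : RowStochastic q) (hBC : Disjoint B C) (hBA : B ⊆ A)
    (hCA : C ⊆ A) : firstHitIn q x (B ∪ C) A = firstHitIn q x B A + firstHitIn q x C A := by
  simp only [firstHitIn_eq_tsum]
  rw [← (summable_firstHitAt hq hBA).tsum_add (summable_firstHitAt hq hCA)]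
  refine tsum_congr fun n => ?_
  rw [firstHitAt, firstHitAt, firstHitAt, ← sum_add_distrib]
  refine sum_congr rfl fun w _ => ?_
  have : w (Fin.last n) ∈ B → w (Fin.last n) ∉ C := fun h => disjoint_left.1 hBC h
  by_cases hB : w (Fin.last n) ∈ B <;> by_cases hC : w (Fin.last n) ∈ C <;> simp_all

lemma firstHitIn_step (hq : RowStochastic q) (hBA : B ⊆ A) (x : E) :
    firstHitIn q x B A =
      ∑ y, q x y * if y ∈ B then 1 else if y ∈ A then 0 else firstHitIn q y B A := by
  have hsummable (y : E) : Summable fun n => q x y * if y ∈ A then 0 else firstHitAt q y B A n := by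
    split_ifs
    exacts [summable_zero.mul_left _, (summable_firstHitAt hq hBA).mul_left _]
  rw [firstHitIn_eq_tsum, (summable_firstHitAt hq hBA).tsum_eq_zero_add]
  simp only [firstHitAt_zero, firstHitAt_succ]
  rw [Summable.tsum_finsetSum fun y _ => hsummable y, ← sum_add_distrib]
  refine sum_congr rfl fun y _ => ?_
  by_cases hyB : y ∈ B
  · simp [hyB, hBA hyB]
  · by_cases hyA : y ∈ A
    · simp [hyB, hyA]
    · simp [hyB, hyA, tsum_mul_left, firstHitIn_eq_tsum]

lemma eq_of_eq_sum_ite (hq : RowStochastic q) (hirr : ChainIrreducible q) (hA : A.Nonempty)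
    {φ u v : E → ℝ} (hu : ∀ x, u x = ∑ y, q x y * if y ∈ A then φ y else u y)
    (hv : ∀ x, v x = ∑ y, q x y * if y ∈ A then φ y else v y) : u = v := by
  set e : E → ℝ := fun y => if y ∈ A then 0 else u y - v y
  have hbdry : ∀ x ∈ A, e x = 0 := fun x hx => if_pos hx
  have hharm : ∀ x ∉ A, e x = ∑ y, q x y * e y := by
    intro x hx
    simp only [e, if_neg hx]
    rw [hu x, hv x, ← sum_sub_distrib]
    exact sum_congr rfl fun y _ => by split_ifs <;> ring
  have hoff : ∀ y ∉ A, u y = v y := by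
    intro y hy
    have hle := le_zero_of_eq_sum_of_notMem hq hirr hA hbdry hharm y
    have hge := le_zero_of_eq_sum_of_notMem hq hirr hA (e := -e) (fun x hx => by simp [hbdry x hx])
      (fun x hx => by simp [hharm x hx]) y
    simp only [e, if_neg hy, Pi.neg_apply] at hle hge
    linarith
  funext x
  rw [hu x, hv x]
  exact sum_congr rfl fun y _ => by split_ifs with hy; exacts [rfl, by rw [hoff y hy]]

lemma firstHitIn_eq_add_mul {D : Finset E} {η : E} (hq : RowStochastic q)
    (hirr : ChainIrreducible q) (hBD : B ⊆ D) (hη : η ∉ D) (x : E) :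
    firstHitIn q x B D = firstHitIn q x B (insert η D) +
      firstHitIn q x {η} (insert η D) * firstHitIn q η B D := by
  have hBA : B ⊆ insert η D := hBD.trans (subset_insert η D)
  have hηA : {η} ⊆ insert η D := singleton_subset_iff.2 (mem_insert_self η D)
  refine congrFun (eq_of_eq_sum_ite hq hirr (insert_nonempty η D)
    (φ := fun y => if y ∈ B then 1 else if y ∈ D then 0 else firstHitIn q η B D)
    (u := fun y => firstHitIn q y B D)
    (v := fun y => firstHitIn q y B (insert η D) + firstHitIn q y {η} (insert η D) *
      firstHitIn q η B D) (fun y => ?_) (fun y => ?_)) x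
  · rw [firstHitIn_step hq hBD]
    refine sum_congr rfl fun z _ => ?_
    by_cases hzB : z ∈ B
    · simp [hzB, hBD hzB]
    by_cases hzη : z = η
    · simp [hzη, hη]
    by_cases hzD : z ∈ D <;> simp [hzB, hzη, hzD]
  · rw [firstHitIn_step hq hBA, firstHitIn_step hq hηA, sum_mul, ← sum_add_distrib]
    refine sum_congr rfl fun z _ => ?_
    by_cases hzB : z ∈ B
    · simp [hzB, hBD hzB, ne_of_mem_of_not_mem (hBD hzB) hη]
    by_cases hzη : z = η
    · subst hzη
      simp [hzB, hη]
    by_cases hzD : z ∈ D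
    · simp [hzB, hzη, hzD]
    · simp [hzB, hzη, hzD]
      ring

end FirstHitting

/-- `firstHitIn q η B (insert η (B ∪ C))` is `P_η[H_B < H⁺_{C ∪ {η}}]`: the first visit to
`B ∪ C ∪ {η}` after time `0` lies in `B`. -/
theorem hitting_prob_alpha_general {E : Type*} [Fintype E] [DecidableEq E]
    (q : E → E → ℝ) (hq : RowStochastic q) (hirr : ChainIrreducible q)
    (B C : Finset E) (η : E) (hBC : Disjoint B C) (hηB : η ∉ B) (hηC : η ∉ C)
    (hC : 0 < firstHitIn q η C (insert η (B ∪ C))) :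
    firstHitIn q η B (B ∪ C) =
      (firstHitIn q η B (insert η (B ∪ C)) / firstHitIn q η C (insert η (B ∪ C))) /
        (1 + firstHitIn q η B (insert η (B ∪ C)) / firstHitIn q η C (insert η (B ∪ C))) := by
  have hηD : η ∉ B ∪ C := by simp [hηB, hηC]
  have hBA : B ⊆ insert η (B ∪ C) := subset_union_left.trans (subset_insert _ _)
  have hCA : C ⊆ insert η (B ∪ C) := subset_union_right.trans (subset_insert _ _)
  have htotal : firstHitIn q η {η} (insert η (B ∪ C)) +
      (firstHitIn q η B (insert η (B ∪ C)) + firstHitIn q η C (insert η (B ∪ C))) = 1 := by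
    rw [← firstHitIn_union hq hBC hBA hCA, ← firstHitIn_union hq
      (disjoint_singleton_left.2 hηD) (by simp) (union_subset hBA hCA),
      ← insert_eq, firstHitIn_self hq hirr (insert_nonempty _ _)]
  have hrenewal := firstHitIn_eq_add_mul hq hirr subset_union_left hηD η
  have hB_nonneg : 0 ≤ firstHitIn q η B (insert η (B ∪ C)) := firstHitIn_nonneg hq
  field_simp
  linear_combination hrenewal + firstHitIn q η B (B ∪ C) * htotal

/-- for an irreducible finite-state Markov chain, a state `η` and two
disjoint sets `B`, `C` not containing `η`:
`P_η[H_B < H_C] = α/(1+α)` with `α = P_η[H_B < H⁺_{C∪{η}}] / P_η[H_C < H⁺_{B∪{η}}]`,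
provided both probabilities are positive.  Hitting probabilities (depending only on the
jump chain `q`) are expressed through `firstHitIn`; note
`{H_B < H⁺_{C∪{η}}}` is the event that the first visit to `B ∪ C ∪ {η}` occurs in `B`. -/
theorem hitting_prob_alpha {E : Type*} [Fintype E] [DecidableEq E]
    (q : E → E → ℝ) (hq : RowStochastic q) (hirr : ChainIrreducible q)
    (B C : Finset E) (η : E) (hBC : Disjoint B C) (hηB : η ∉ B) (hηC : η ∉ C)
    (hB : 0 < firstHitIn q η B (insert η (B ∪ C)))
    (hC : 0 < firstHitIn q η C (insert η (B ∪ C))) :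
    firstHitIn q η B (B ∪ C) =
      (firstHitIn q η B (insert η (B ∪ C)) / firstHitIn q η C (insert η (B ∪ C))) /
        (1 + firstHitIn q η B (insert η (B ∪ C)) / firstHitIn q η C (insert η (B ∪ C))) :=
  hitting_prob_alpha_general q hq hirr B C η hBC hηB hηC hC
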